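/- For every fixed integer δ ≥ 0, Σ_{(δ1,δ2,δ3)} 12^{δ1} · 8^{δ2} · 4^{δ3} · T_{δ1}(d) · T_{δ2}(d) · T_{δ3}(d) = (24d)^δ/δ! + O(d^{δ−1}) as d → ∞, where the sum ranges over all ordered triples (δ1, δ2, δ3) of nonnegative integers with δ1 + δ2 + δ3 = δ. -/

import Mathlib

/-!
`T k d` counts multisets of size `k` from `d` elements, so `T k d = d (d + 1) ⋯ (d + k - 1) / k!`,
a product of `k` factors `d + O(1)` divided by `k!`; hence `T k d = d ^ k / k! + O(d ^ (k - 1))`.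
Expansions `c d ^ k + O(d ^ (k - 1))` multiply and add like their leading terms, so the sum is
`Σ 12^δ₁ 8^δ₂ 4^δ₃ / (δ₁! δ₂! δ₃!) · d ^ δ + O(d ^ (δ - 1))`, and the multinomial theorem turns the
coefficient into `(12 + 8 + 4) ^ δ / δ!`.
-/

open Filter Asymptotics

/-- `T k d` is the number of weakly decreasing integer tuples `d ≥ i₁ ≥ ⋯ ≥ i_k ≥ 1`,
evaluated in `ℝ`, with `T 0 d = 1`. -/
noncomputable def T : ℕ → ℕ → ℝ
  | 0, _ => 1
  | k + 1, d => ∑ i ∈ Finset.Icc 1 d, T k i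

open Nat Finset

lemma add_pow_div_factorial {K : Type*} [Field K] [CharZero K] (x y : K) (n : ℕ) :
    (x + y) ^ n / n ! = ∑ a ∈ range (n + 1), x ^ a / a ! * (y ^ (n - a) / (n - a)!) := by
  rw [add_pow, sum_div]
  refine sum_congr rfl fun a ha => ?_
  have : (n ! : K) ≠ 0 := Nat.cast_ne_zero.2 n.factorial_ne_zero
  rw [Nat.cast_choose K (Nat.lt_succ_iff.1 (mem_range.1 ha))]
  field_simp

lemma add_add_pow_div_factorial {K : Type*} [Field K] [CharZero K] (x y z : K) (n : ℕ) :
    (x + y + z) ^ n / n ! = ∑ a ∈ range (n + 1), ∑ b ∈ range (n - a + 1),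
      x ^ a / a ! * (y ^ b / b ! * (z ^ (n - a - b) / (n - a - b)!)) := by
  simp only [add_assoc x, add_pow_div_factorial x, add_pow_div_factorial y, mul_sum]

lemma T_eq_multichoose (k d : ℕ) : T k d = d.multichoose k := by
  induction k generalizing d with
  | zero => simp [T]
  | succ k ih =>
    induction d with
    | zero => simp [T]
    | succ d ihd =>
      rw [T, sum_Icc_succ_top (by omega), ← T, ihd, ih, multichoose_succ_succ]
      push_cast
      ring

lemma T_eq_prod_div_factorial (k d : ℕ) : T k d = (∏ i ∈ range k, ((d : ℝ) + i)) / k ! := by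
  rw [T_eq_multichoose, eq_div_iff (by positivity), multichoose_eq]
  have := d.ascFactorial_eq_factorial_mul_choose' k
  rw [ascFactorial_eq_prod_range] at this
  exact_mod_cast (this.trans (Nat.mul_comm _ _)).symm

def HasLeadingTerm (f : ℕ → ℝ) (c : ℝ) (k : ℤ) : Prop :=
  (fun d : ℕ => f d - c * (d : ℝ) ^ k) =O[atTop] fun d : ℕ => (d : ℝ) ^ (k - 1)

lemma isBigO_natCast_zpow_of_le {a b : ℤ} (h : a ≤ b) :
    (fun d : ℕ => (d : ℝ) ^ a) =O[atTop] fun d : ℕ => (d : ℝ) ^ b := by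
  refine IsBigO.of_bound 1 ?_
  filter_upwards [eventually_ge_atTop 1] with d hd
  have hd : (1 : ℝ) ≤ d := by exact_mod_cast hd
  rw [one_mul, Real.norm_of_nonneg (by positivity), Real.norm_of_nonneg (by positivity)]
  exact zpow_le_zpow_right₀ hd h

lemma natCast_zpow_add_eventuallyEq (a b : ℤ) :
    (fun d : ℕ => (d : ℝ) ^ (a + b)) =ᶠ[atTop] fun d : ℕ => (d : ℝ) ^ a * (d : ℝ) ^ b := by
  filter_upwards [eventually_ne_atTop 0] with d hd
  exact zpow_add₀ (Nat.cast_ne_zero.2 hd) a b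

namespace HasLeadingTerm

variable {f g : ℕ → ℝ} {a b c : ℝ} {m n k : ℤ}

lemma isBigO (hf : HasLeadingTerm f c k) : f =O[atTop] fun d : ℕ => (d : ℝ) ^ k :=
  ((hf.trans (isBigO_natCast_zpow_of_le (by omega))).add
    ((isBigO_refl _ _).const_mul_left c)).congr_left fun d => by ring

lemma const_mul (hf : HasLeadingTerm f c k) (a : ℝ) :
    HasLeadingTerm (fun d => a * f d) (a * c) k :=
  (hf.const_mul_left a).congr_left fun d => by ring

lemma mul (hf : HasLeadingTerm f a m) (hg : HasLeadingTerm g b n) :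
    HasLeadingTerm (fun d => f d * g d) (a * b) (m + n) := by
  have h₁ := (IsBigO.mul hf hg.isBigO)
    |>.trans_eventuallyEq (natCast_zpow_add_eventuallyEq (m - 1) n).symm
  have h₂ := (((isBigO_refl (fun d : ℕ => (d : ℝ) ^ m) atTop).const_mul_left a).mul hg)
    |>.trans_eventuallyEq (natCast_zpow_add_eventuallyEq m (n - 1)).symm
  rw [show m - 1 + n = m + n - 1 by ring] at h₁
  rw [show m + (n - 1) = m + n - 1 by ring] at h₂
  refine (h₁.add h₂).congr' ?_ EventuallyEq.rfl
  filter_upwards [natCast_zpow_add_eventuallyEq m n] with d hd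
  rw [hd]
  ring

lemma sum {ι : Type*} {s : Finset ι} {f : ι → ℕ → ℝ} {c : ι → ℝ}
    (h : ∀ i ∈ s, HasLeadingTerm (f i) (c i) k) :
    HasLeadingTerm (fun d => ∑ i ∈ s, f i d) (∑ i ∈ s, c i) k :=
  (IsBigO.fun_sum h).congr_left fun d => by rw [sum_mul, ← sum_sub_distrib]

lemma prod {ι : Type*} [DecidableEq ι] {s : Finset ι} {f : ι → ℕ → ℝ} {c : ι → ℝ} {k : ι → ℤ}
    (h : ∀ i ∈ s, HasLeadingTerm (f i) (c i) (k i)) :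
    HasLeadingTerm (fun d => ∏ i ∈ s, f i d) (∏ i ∈ s, c i) (∑ i ∈ s, k i) := by
  induction s using Finset.induction_on with
  | empty => simpa [HasLeadingTerm] using isBigO_zero _ _
  | insert i s hi ih =>
    simp only [prod_insert hi, sum_insert hi]
    exact (h i (mem_insert_self i s)).mul (ih fun j hj => h j (mem_insert_of_mem hj))

end HasLeadingTerm

lemma hasLeadingTerm_natCast_add (x : ℝ) : HasLeadingTerm (fun d => d + x) 1 1 := by
  simpa [HasLeadingTerm] using isBigO_const_one ℝ x atTop

lemma hasLeadingTerm_T (k : ℕ) : HasLeadingTerm (T k) (1 / k !) k := by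
  have := (HasLeadingTerm.prod fun i (_ : i ∈ range k) => hasLeadingTerm_natCast_add i).const_mul
    (1 / k ! : ℝ)
  simp only [prod_const_one, sum_const, card_range, nsmul_eq_mul, mul_one] at this
  exact IsBigO.congr_left this fun d => by rw [T_eq_prod_div_factorial]; ring

/-- For fixed `δ ≥ 0`, summing over all ordered triples `(δ1, δ2, δ3)` of nonnegative
integers with `δ1 + δ2 + δ3 = δ`,
`Σ 12^{δ1} 8^{δ2} 4^{δ3} T_{δ1}(d) T_{δ2}(d) T_{δ3}(d) = (24d)^δ/δ! + O(d^{δ−1})`. -/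
theorem stmt7 (δ : ℕ) :
    (fun d : ℕ =>
        (∑ δ1 ∈ Finset.range (δ + 1), ∑ δ2 ∈ Finset.range (δ - δ1 + 1),
          (12 : ℝ) ^ δ1 * (8) ^ δ2 * (4) ^ (δ - δ1 - δ2) *
            T δ1 d * T δ2 d * T (δ - δ1 - δ2) d)
        - ((24) * (d : ℝ)) ^ δ / (Nat.factorial δ)) =O[atTop]
      fun d : ℕ => (d : ℝ) ^ ((δ : ℤ) - 1) := by
  have hterm (a b c : ℕ) (habc : a + b + c = δ) :
      HasLeadingTerm (fun d => 12 ^ a * 8 ^ b * 4 ^ c * T a d * T b d * T c d)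
        ((12 : ℝ) ^ a / a ! * (8 ^ b / b ! * (4 ^ c / c !))) δ := by
    have h := (((hasLeadingTerm_T a).mul (hasLeadingTerm_T b)).mul (hasLeadingTerm_T c)).const_mul
      ((12 : ℝ) ^ a * 8 ^ b * 4 ^ c)
    rw [← Nat.cast_add, ← Nat.cast_add, habc] at h
    convert h using 1
    · ext d
      ring
    · ring
  have hsum := HasLeadingTerm.sum (s := range (δ + 1)) fun a ha =>
    HasLeadingTerm.sum (s := range (δ - a + 1)) fun b hb =>
      hterm a b (δ - a - b) (by simp only [mem_range] at ha hb; omega)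
  rw [← add_add_pow_div_factorial] at hsum
  refine IsBigO.congr_left hsum fun d => ?_
  rw [zpow_natCast]
  ring
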